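/- arXiv:1704.06160 — 10 statements merged into one kernel-verified Lean document; each statement's English description precedes it below -/
import Mathlib

section
/- Let Σ be a symmetric positive definite k×k real matrix. Then the minimum of v'Σv over the unit L1-sphere {v ∈ ℝ^k : ∑_{i=1}^k |v_i| = 1} equals 1 / max_{s ∈ {-1,1}^k} (s'Σ^{-1}s). -/
/-! Writing `A = Σ⁻¹` and `M = max_s s'As`, every `v` has `‖v‖₁ = s'v = s'A(Σv)` for its sign
vector `s`, so Cauchy–Schwarz for the inner product given by `A` yields
`‖v‖₁² ≤ (s'As)(v'Σv) ≤ M v'Σv`. Equality is attained at `v = As₀ / M`, where `s₀` is a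
maximizing sign vector. -/

open MeasureTheory Matrix

/-- Largest "eigenvalue" via the Rayleigh quotient (equals the largest eigenvalue
for symmetric matrices). -/
noncomputable def lamMax {k : ℕ} (A : Matrix (Fin k) (Fin k) ℝ) : ℝ :=
  ⨆ u : {u : Fin k → ℝ // u ⬝ᵥ u = 1}, u.1 ⬝ᵥ A *ᵥ u.1

/-- Smallest "eigenvalue" via the Rayleigh quotient. -/
noncomputable def lamMin {k : ℕ} (A : Matrix (Fin k) (Fin k) ℝ) : ℝ :=
  ⨅ u : {u : Fin k → ℝ // u ⬝ᵥ u = 1}, u.1 ⬝ᵥ A *ᵥ u.1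

/-- The scatter halfspace depth of a scatter matrix `Sg` w.r.t. the probability
measure `P`, with location `T`. -/
noncomputable def HD {k : ℕ} (P : Measure (Fin k → ℝ)) (T : Fin k → ℝ)
    (Sg : Matrix (Fin k) (Fin k) ℝ) : ℝ :=
  ⨅ u : {u : Fin k → ℝ // u ⬝ᵥ u = 1},
    min (P {x | |u.1 ⬝ᵥ (x - T)| ≤ Real.sqrt (u.1 ⬝ᵥ Sg *ᵥ u.1)}).toReal
        (P {x | Real.sqrt (u.1 ⬝ᵥ Sg *ᵥ u.1) ≤ |u.1 ⬝ᵥ (x - T)|}).toReal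

/-- Matrix square root via the continuous functional calculus. -/
noncomputable def msqrt {k : ℕ} (A : Matrix (Fin k) (Fin k) ℝ) : Matrix (Fin k) (Fin k) ℝ :=
  cfc Real.sqrt A

/-- Matrix logarithm via the continuous functional calculus. -/
noncomputable def mlog {k : ℕ} (A : Matrix (Fin k) (Fin k) ℝ) : Matrix (Fin k) (Fin k) ℝ :=
  cfc Real.log A

/-- Matrix real power via the continuous functional calculus. -/
noncomputable def mpow {k : ℕ} (A : Matrix (Fin k) (Fin k) ℝ) (t : ℝ) :
    Matrix (Fin k) (Fin k) ℝ :=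
  cfc (fun x : ℝ => x ^ t) A

/-- The geodesic path from `A` to `B` in the space of positive definite matrices. -/
noncomputable def geoPath {k : ℕ} (A B : Matrix (Fin k) (Fin k) ℝ) (t : ℝ) :
    Matrix (Fin k) (Fin k) ℝ :=
  msqrt A * mpow ((msqrt A)⁻¹ * B * (msqrt A)⁻¹) t * msqrt A

/-- The harmonic path from `A` to `B`. -/
noncomputable def harmPath {k : ℕ} (A B : Matrix (Fin k) (Fin k) ℝ) (t : ℝ) :
    Matrix (Fin k) (Fin k) ℝ :=
  ((1 - t) • A⁻¹ + t • B⁻¹)⁻¹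

/-- Frobenius norm of a matrix. -/
noncomputable def frob {k : ℕ} (A : Matrix (Fin k) (Fin k) ℝ) : ℝ :=
  Real.sqrt (∑ i, ∑ j, (A i j) ^ 2)

/-- Geodesic distance on the space of positive definite matrices. -/
noncomputable def dg {k : ℕ} (A B : Matrix (Fin k) (Fin k) ℝ) : ℝ :=
  frob (mlog ((msqrt A)⁻¹ * B * (msqrt A)⁻¹))

/-- Sign vectors in `{-1,1}^k`. -/
def SignVec (k : ℕ) := {s : Fin k → ℝ // ∀ i, s i = 1 ∨ s i = -1}

namespace Matrix

variable {ι : Type*} [Fintype ι]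

theorem PosSemidef.sq_dotProduct_mulVec_le {A : Matrix ι ι ℝ} (hA : A.PosSemidef)
    (x y : ι → ℝ) : (x ⬝ᵥ A *ᵥ y) ^ 2 ≤ (x ⬝ᵥ A *ᵥ x) * (y ⬝ᵥ A *ᵥ y) := by
  let := A.toSeminormedAddCommGroup hA
  let := A.toInnerProductSpace hA
  have inner_eq (a b : ι → ℝ) : inner ℝ a b = a ⬝ᵥ A *ᵥ b := dotProduct_comm _ _
  simpa only [inner_eq, sq] using real_inner_mul_inner_self_le x y

theorem PosDef.sq_dotProduct_le [DecidableEq ι] {S : Matrix ι ι ℝ} (hS : S.PosDef)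
    (s v : ι → ℝ) : (s ⬝ᵥ v) ^ 2 ≤ (s ⬝ᵥ S⁻¹ *ᵥ s) * (v ⬝ᵥ S *ᵥ v) := by
  have inv_mulVec_mulVec : S⁻¹ *ᵥ (S *ᵥ v) = v := by
    rw [mulVec_mulVec, nonsing_inv_mul S (isUnit_iff_ne_zero.mpr hS.det_pos.ne'), one_mulVec]
  have h := hS.inv.posSemidef.sq_dotProduct_mulVec_le s (S *ᵥ v)
  rwa [inv_mulVec_mulVec, dotProduct_comm (S *ᵥ v)] at h

theorem PosDef.dotProduct_mulVec_inv_mulVec [DecidableEq ι] {S : Matrix ι ι ℝ} (hS : S.PosDef)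
    (s : ι → ℝ) :
    (S⁻¹ *ᵥ s) ⬝ᵥ S *ᵥ (S⁻¹ *ᵥ s) = s ⬝ᵥ S⁻¹ *ᵥ s := by
  rw [mulVec_mulVec, mul_nonsing_inv S (isUnit_iff_ne_zero.mpr hS.det_pos.ne'), one_mulVec,
    dotProduct_comm]

end Matrix

namespace SignVec

instance (k : ℕ) : Nonempty (SignVec k) := ⟨⟨fun _ => 1, fun _ => Or.inl rfl⟩⟩

instance (k : ℕ) : Finite (SignVec k) :=
  Set.Finite.to_subtype <| (Set.Finite.pi fun _ => Set.toFinite {1, -1}).subset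
    fun _ hs i _ => hs i

theorem ne_zero {k : ℕ} [NeZero k] (s : SignVec k) : s.1 ≠ 0 := fun h => by
  have h0 := congrFun h 0
  rcases s.2 0 with hs | hs <;> simp [hs] at h0

theorem dotProduct_le_sum_abs {k : ℕ} (s : SignVec k) (v : Fin k → ℝ) :
    s.1 ⬝ᵥ v ≤ ∑ i, |v i| :=
  Finset.sum_le_sum fun i _ => by
    rcases s.2 i with hs | hs <;> simp [hs, le_abs_self, neg_le_abs]

theorem exists_dotProduct_eq_sum_abs {k : ℕ} (v : Fin k → ℝ) :
    ∃ s : SignVec k, s.1 ⬝ᵥ v = ∑ i, |v i| := by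
  refine ⟨⟨fun i => if 0 ≤ v i then 1 else -1, fun i => by dsimp only; split_ifs <;> simp⟩,
    Finset.sum_congr rfl fun i _ => ?_⟩
  dsimp only
  split_ifs with h
  · simp [abs_of_nonneg h]
  · simp [abs_of_neg (not_le.mp h)]

end SignVec

theorem sq_sum_abs_le_iSup_signVec_mul {k : ℕ} {S : Matrix (Fin k) (Fin k) ℝ} (hS : S.PosDef)
    (v : Fin k → ℝ) :
    (∑ i, |v i|) ^ 2 ≤ (⨆ s : SignVec k, s.1 ⬝ᵥ S⁻¹ *ᵥ s.1) * (v ⬝ᵥ S *ᵥ v) := by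
  obtain ⟨s, hs⟩ := SignVec.exists_dotProduct_eq_sum_abs v
  rw [← hs]
  refine (hS.sq_dotProduct_le s.1 v).trans (mul_le_mul_of_nonneg_right ?_ ?_)
  · exact le_ciSup (Finite.bddAbove_range fun s : SignVec k => s.1 ⬝ᵥ S⁻¹ *ᵥ s.1) s
  · simpa using hS.posSemidef.dotProduct_mulVec_nonneg v

/-- the minimum of the quadratic form `v ↦ v'Σv` over the unit
`L¹`-sphere equals `1 / max_{s ∈ {-1,1}^k} s'Σ⁻¹s`. -/
theorem l1_min_quadform {k : ℕ} [NeZero k] (Sg : Matrix (Fin k) (Fin k) ℝ)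
    (hSg : Sg.PosDef) :
    IsLeast ((fun v : Fin k → ℝ => v ⬝ᵥ Sg *ᵥ v) '' {v | ∑ i, |v i| = 1})
      (1 / ⨆ s : SignVec k, s.1 ⬝ᵥ Sg⁻¹ *ᵥ s.1) := by
  obtain ⟨s₀, hs₀⟩ := exists_eq_ciSup_of_finite (f := fun s : SignVec k => s.1 ⬝ᵥ Sg⁻¹ *ᵥ s.1)
  set M := ⨆ s : SignVec k, s.1 ⬝ᵥ Sg⁻¹ *ᵥ s.1
  have hM : 0 < M := hs₀ ▸ by simpa using hSg.inv.dotProduct_mulVec_pos s₀.ne_zero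
  constructor
  · set v := M⁻¹ • Sg⁻¹ *ᵥ s₀.1
    have hq : v ⬝ᵥ Sg *ᵥ v = 1 / M := by
      simp only [v, mulVec_smul, smul_dotProduct, dotProduct_smul,
        hSg.dotProduct_mulVec_inv_mulVec, hs₀, smul_eq_mul]
      field_simp
    have hv_le : ∑ i, |v i| ≤ 1 := by
      have h := sq_sum_abs_le_iSup_signVec_mul hSg v
      rw [hq, mul_one_div_cancel hM.ne'] at h
      exact (pow_le_one_iff_of_nonneg (by positivity) two_ne_zero).mp h
    have hv_ge : 1 ≤ ∑ i, |v i| := by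
      have h := s₀.dotProduct_le_sum_abs v
      rwa [dotProduct_smul, hs₀, smul_eq_mul, inv_mul_cancel₀ hM.ne'] at h
    exact ⟨v, le_antisymm hv_le hv_ge, hq⟩
  · rintro _ ⟨v, hv, rfl⟩
    have h := sq_sum_abs_le_iSup_signVec_mul hSg v
    rw [hv, one_pow] at h
    rwa [div_le_iff₀' hM]
end

section
/- Fix a symmetric positive definite k×k matrix Σ with all diagonal entries at most 1. Then max_{s ∈ {-1,1}^k} s'Σ^{-1}s ≥ k, with equality if and only if Σ is the identity matrix I_k. -/
open MeasureTheory Matrix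

/-!
Averaging `s ⬝ᵥ A *ᵥ s` over the `2 ^ k` sign vectors kills the off-diagonal terms, so the
maximum is at least `trace A`. For positive definite `Σ`, the identity
`Σ + Σ⁻¹ - 2 = (Σ - 1) Σ⁻¹ (Σ - 1)` gives `trace Σ + trace Σ⁻¹ ≥ 2k`, with equality only for
`Σ = 1`. As `trace Σ ≤ k`, the maximum for `A = Σ⁻¹` is at least `k`, and if it equals `k` then
`trace Σ + trace Σ⁻¹ ≤ 2k`, which forces `Σ = 1`.
-/

open scoped ComplexOrder

namespace Matrix.PosDef

variable {𝕜 n : Type*} [RCLike 𝕜] [Fintype n] {S : Matrix n n 𝕜}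

theorem eq_zero_of_conjTranspose_mul_mul_same_eq_zero {m : Type*} [Fintype m] {B : Matrix n m 𝕜}
    (hS : S.PosDef) (h : Bᴴ * S * B = 0) : B = 0 := by
  refine ext_iff_mulVec.mpr fun x => ?_
  by_contra hx
  rw [zero_mulVec] at hx
  have := hS.dotProduct_mulVec_pos hx
  simp [star_mulVec, dotProduct_mulVec, vecMul_vecMul, ← Matrix.mul_assoc, h] at this

variable [DecidableEq n]

theorem add_inv_sub_two_eq (hS : S.PosDef) :
    S + S⁻¹ - (2 : 𝕜) • 1 = (S - 1)ᴴ * S⁻¹ * (S - 1) := by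
  have hu : IsUnit S.det := hS.isUnit.map detMonoidHom
  rw [conjTranspose_sub, hS.isHermitian.eq, conjTranspose_one]
  simp only [sub_mul, mul_sub, mul_nonsing_inv _ hu, nonsing_inv_mul _ hu, one_mul, mul_one]
  module

theorem trace_add_trace_inv_sub_eq (hS : S.PosDef) :
    S.trace + S⁻¹.trace - 2 * Fintype.card n = ((S - 1)ᴴ * S⁻¹ * (S - 1)).trace := by
  rw [← hS.add_inv_sub_two_eq, trace_sub, trace_add, trace_smul, trace_one, smul_eq_mul]

theorem two_mul_card_le_trace_add_trace_inv (hS : S.PosDef) :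
    2 * Fintype.card n ≤ S.trace + S⁻¹.trace := by
  rw [← sub_nonneg, hS.trace_add_trace_inv_sub_eq]
  exact (hS.inv.posSemidef.conjTranspose_mul_mul_same _).trace_nonneg

theorem eq_one_of_trace_add_trace_inv_le (hS : S.PosDef)
    (h : S.trace + S⁻¹.trace ≤ 2 * Fintype.card n) : S = 1 := by
  have hpsd := hS.inv.posSemidef.conjTranspose_mul_mul_same (S - 1)
  have htr : ((S - 1)ᴴ * S⁻¹ * (S - 1)).trace = 0 := by
    rw [← hS.trace_add_trace_inv_sub_eq]
    exact le_antisymm (sub_nonpos.mpr h) (sub_nonneg.mpr hS.two_mul_card_le_trace_add_trace_inv)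
  exact sub_eq_zero.mp (hS.inv.eq_zero_of_conjTranspose_mul_mul_same_eq_zero
    (hpsd.trace_eq_zero_iff.mp htr))

end Matrix.PosDef

section

variable {ι : Type*} [Fintype ι] [DecidableEq ι]

theorem sum_units_mul_units (i j : ι) :
    ∑ u : ι → ℤˣ, ((u i * u j : ℤˣ) : ℤ) = if i = j then 2 ^ Fintype.card ι else 0 := by
  split_ifs with hij
  · simp [hij, Fintype.card_units_int]
  · -- multiplying `u` by the sign flip at `i` negates every summand
    have hflip := Fintype.sum_equiv (Equiv.mulLeft (Pi.mulSingle i (-1)))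
      (fun u : ι → ℤˣ => ((u i * u j : ℤˣ) : ℤ)) (fun u => -((u i * u j : ℤˣ) : ℤ))
      (fun u => by simp [Ne.symm hij])
    rw [Finset.sum_neg_distrib] at hflip
    omega

theorem sum_units_dotProduct_mulVec {R : Type*} [CommRing R] (A : Matrix ι ι R) :
    ∑ u : ι → ℤˣ, (fun i => ((u i : ℤ) : R)) ⬝ᵥ A *ᵥ (fun i => ((u i : ℤ) : R)) =
      2 ^ Fintype.card ι * A.trace := by
  calc _ = ∑ i, ∑ j, A i j * ((∑ u : ι → ℤˣ, ((u i * u j : ℤˣ) : ℤ) : ℤ) : R) := by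
        simp only [dotProduct, mulVec, Finset.mul_sum, Int.cast_sum, Units.val_mul, Int.cast_mul]
        rw [Finset.sum_comm]
        refine Finset.sum_congr rfl fun i _ => ?_
        rw [Finset.sum_comm]
        refine Finset.sum_congr rfl fun j _ => Finset.sum_congr rfl fun u _ => by ring
    _ = _ := by
        simp only [sum_units_mul_units, apply_ite (Int.cast : ℤ → R), Int.cast_pow, Int.cast_ofNat,
          Int.cast_zero, mul_ite, mul_zero, Finset.sum_ite_eq, Finset.mem_univ, if_true, trace,
          diag_apply, Finset.mul_sum]
        exact Finset.sum_congr rfl fun i _ => mul_comm _ _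

end

namespace SignVec

variable {k : ℕ}

def ofUnits (u : Fin k → ℤˣ) : SignVec k :=
  ⟨fun i => ((u i : ℤ) : ℝ), fun i => by rcases Int.units_eq_one_or (u i) with h | h <;> simp [h]⟩

theorem ofUnits_surjective : Function.Surjective (ofUnits (k := k)) := by
  intro s
  refine ⟨fun i => if s.1 i = 1 then 1 else -1, Subtype.ext (funext fun i => ?_)⟩
  rcases s.2 i with h | h <;> norm_num [ofUnits, h]

instance : Finite (SignVec k) := Finite.of_surjective _ ofUnits_surjective

instance : Nonempty (SignVec k) := ⟨ofUnits 1⟩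

theorem dotProduct_self (s : SignVec k) : s.1 ⬝ᵥ s.1 = k := by
  have hsq : ∀ i, s.1 i * s.1 i = 1 := fun i => by rcases s.2 i with h | h <;> simp [h]
  simp [dotProduct, hsq]

theorem trace_le_iSup_dotProduct_mulVec (A : Matrix (Fin k) (Fin k) ℝ) :
    A.trace ≤ ⨆ s : SignVec k, s.1 ⬝ᵥ A *ᵥ s.1 := by
  have havg : ∑ _u : Fin k → ℤˣ, A.trace ≤ ∑ u, (ofUnits u).1 ⬝ᵥ A *ᵥ (ofUnits u).1 := by
    rw [Finset.sum_const, Finset.card_univ, Fintype.card_fun, Fintype.card_units_int,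
      nsmul_eq_mul, Nat.cast_pow, Nat.cast_ofNat]
    exact (sum_units_dotProduct_mulVec A).ge
  obtain ⟨u, -, hu⟩ := Finset.exists_le_of_sum_le Finset.univ_nonempty havg
  exact hu.trans (le_ciSup (f := fun s : SignVec k => s.1 ⬝ᵥ A *ᵥ s.1)
    (Set.finite_range _).bddAbove (ofUnits u))

end SignVec

theorem sign_sup_inv_quadform_ge_general {k : ℕ} (Sg : Matrix (Fin k) (Fin k) ℝ)
    (hSg : Sg.PosDef) (hdiag : ∀ i, Sg i i ≤ 1) :
    (k : ℝ) ≤ (⨆ s : SignVec k, s.1 ⬝ᵥ Sg⁻¹ *ᵥ s.1) ∧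
      ((⨆ s : SignVec k, s.1 ⬝ᵥ Sg⁻¹ *ᵥ s.1) = (k : ℝ) ↔ Sg = 1) := by
  have htrace : Sg.trace ≤ ∑ _i : Fin k, 1 := Finset.sum_le_sum fun i _ => hdiag i
  have hpd := hSg.two_mul_card_le_trace_add_trace_inv
  have hsup := SignVec.trace_le_iSup_dotProduct_mulVec Sg⁻¹
  simp only [Finset.sum_const, Finset.card_univ, Fintype.card_fin, nsmul_one] at htrace hpd
  refine ⟨by linarith, fun h => hSg.eq_one_of_trace_add_trace_inv_le ?_, ?_⟩
  · rw [Fintype.card_fin]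
    linarith
  · rintro rfl
    simp [SignVec.dotProduct_self]

/-- if all diagonal entries of the positive definite matrix `Σ` are
at most `1`, then `max_{s ∈ {-1,1}^k} s'Σ⁻¹s ≥ k`, with equality iff `Σ = I_k`. -/
theorem sign_sup_inv_quadform_ge {k : ℕ} [NeZero k] (Sg : Matrix (Fin k) (Fin k) ℝ)
    (hSg : Sg.PosDef) (hdiag : ∀ i, Sg i i ≤ 1) :
    (k : ℝ) ≤ (⨆ s : SignVec k, s.1 ⬝ᵥ Sg⁻¹ *ᵥ s.1) ∧
      ((⨆ s : SignVec k, s.1 ⬝ᵥ Sg⁻¹ *ᵥ s.1) = (k : ℝ) ↔ Sg = 1) :=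
  sign_sup_inv_quadform_ge_general Sg hSg hdiag
end

section
/- For symmetric positive definite k×k matrices Σ_a, Σ_b and t ∈ [0,1], let Σ̃_t = Σ_a^{1/2}(Σ_a^{-1/2} Σ_b Σ_a^{-1/2})^t Σ_a^{1/2} be the geodesic path and Σ*_t = ((1-t)Σ_a^{-1} + tΣ_b^{-1})^{-1} the harmonic path. Then λ_1(Σ*_t) ≤ λ_1(Σ̃_t) ≤ max(λ_1(Σ_a), λ_1(Σ_b)), where λ_1 denotes the largest eigenvalue. -/
open MeasureTheory Matrix

/-! Conjugating by `S = Σ_a^{1/2}` turns `Σ*_t`, `Σ̃_t` and `(1-t)Σ_a + tΣ_b` into `S f(M) S`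
for `M = Σ_a^{-1/2} Σ_b Σ_a^{-1/2}` and the scalar functions `f(x) = (1 - t + t/x)⁻¹`, `x^t`
and `1 - t + t x`. These are ordered pointwise on `(0, ∞)` by the weighted
harmonic-geometric-arithmetic mean inequality, so the functional calculus and congruence give
`Σ*_t ≤ Σ̃_t ≤ (1-t)Σ_a + tΣ_b` in the Loewner order. Being a supremum of Rayleigh quotients,
`λ₁` is monotone for that order and bounded on `(1-t)Σ_a + tΣ_b` by `max (λ₁ Σ_a) (λ₁ Σ_b)`. -/

open scoped MatrixOrder

lemma Matrix.continuousOn_spectrum {n R Y : Type*} [Fintype n] [DecidableEq n] [Field R]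
    [TopologicalSpace R] [T1Space R] [TopologicalSpace Y] (A : Matrix n n R) (f : R → Y) :
    ContinuousOn f (spectrum R A) :=
  A.finite_spectrum.continuousOn f

lemma Real.rpow_le_one_sub_add_mul {x t : ℝ} (hx : 0 ≤ x) (ht₀ : 0 ≤ t) (ht₁ : t ≤ 1) :
    x ^ t ≤ 1 - t + t * x := by
  simpa using Real.geom_mean_le_arith_mean2_weighted (sub_nonneg.2 ht₁) ht₀ zero_le_one hx
    (by ring)

lemma Real.inv_one_sub_add_mul_inv_le_rpow {x t : ℝ} (hx : 0 < x) (ht₀ : 0 ≤ t)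
    (ht₁ : t ≤ 1) : (1 - t + t * x⁻¹)⁻¹ ≤ x ^ t := by
  refine inv_le_of_inv_le₀ (Real.rpow_pos_of_pos hx t) ?_
  rw [← Real.inv_rpow hx.le]
  exact Real.rpow_le_one_sub_add_mul (inv_nonneg.2 hx.le) ht₀ ht₁

lemma one_sub_add_mul_pos {α : Type*} [Field α] [LinearOrder α] [IsStrictOrderedRing α]
    {t y : α} (ht₀ : 0 ≤ t) (ht₁ : t ≤ 1) (hy : 0 < y) :
    0 < 1 - t + t * y := by
  rcases ht₁.eq_or_lt with rfl | ht₁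
  · simpa using hy
  · nlinarith [mul_nonneg ht₀ hy.le]

section
variable {n : Type*} [Fintype n]

lemma abs_le_one_of_dotProduct_self_eq_one {u : n → ℝ} (hu : u ⬝ᵥ u = 1) (i : n) :
    |u i| ≤ 1 :=
  abs_le_one_iff_mul_self_le_one.2 <| hu ▸
    Finset.single_le_sum (fun j _ => mul_self_nonneg (u j)) (Finset.mem_univ i)

lemma dotProduct_mulVec_mono {X Y : Matrix n n ℝ} (h : X ≤ Y) (u : n → ℝ) :
    u ⬝ᵥ X *ᵥ u ≤ u ⬝ᵥ Y *ᵥ u := by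
  have := (Matrix.le_iff.1 h).dotProduct_mulVec_nonneg u
  rw [star_trivial, Matrix.sub_mulVec, dotProduct_sub] at this
  linarith

lemma bddAbove_range_dotProduct_mulVec (X : Matrix n n ℝ) :
    BddAbove (Set.range fun u : {u : n → ℝ // u ⬝ᵥ u = 1} => u.1 ⬝ᵥ X *ᵥ u.1) := by
  refine ⟨∑ i, ∑ j, |X i j|, ?_⟩
  rintro _ ⟨⟨u, hu⟩, rfl⟩
  have hle (i : n) : |u i| ≤ 1 := abs_le_one_of_dotProduct_self_eq_one hu i
  simp only [dotProduct, Matrix.mulVec, Finset.mul_sum]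
  refine Finset.sum_le_sum fun i _ => Finset.sum_le_sum fun j _ => ?_
  calc u i * (X i j * u j) ≤ |X i j| * (|u i| * |u j|) := by
        rw [mul_left_comm, ← abs_mul, ← abs_mul]
        exact le_abs_self _
    _ ≤ |X i j| := by
        have := mul_le_one₀ (hle i) (abs_nonneg _) (hle j)
        exact mul_le_of_le_one_right (abs_nonneg _) this

end

section
variable {k : ℕ}

lemma lamMax_mono : Monotone (lamMax (k := k)) := fun _ Y h =>
  ciSup_mono (bddAbove_range_dotProduct_mulVec Y) fun u => dotProduct_mulVec_mono h u.1

lemma lamMax_smul_add_smul_le_max (A B : Matrix (Fin k) (Fin k) ℝ) {t : ℝ} (ht₀ : 0 ≤ t)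
    (ht₁ : t ≤ 1) :
    lamMax ((1 - t) • A + t • B) ≤ max (lamMax A) (lamMax B) := by
  rcases isEmpty_or_nonempty {u : Fin k → ℝ // u ⬝ᵥ u = 1} with hu | hu
  · simp [lamMax]
  refine ciSup_le fun u => ?_
  have hA : u.1 ⬝ᵥ A *ᵥ u.1 ≤ lamMax A := le_ciSup (bddAbove_range_dotProduct_mulVec A) u
  have hB : u.1 ⬝ᵥ B *ᵥ u.1 ≤ lamMax B := le_ciSup (bddAbove_range_dotProduct_mulVec B) u
  rw [Matrix.add_mulVec, Matrix.smul_mulVec, Matrix.smul_mulVec, dotProduct_add, dotProduct_smul,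
    dotProduct_smul, smul_eq_mul, smul_eq_mul]
  calc (1 - t) * (u.1 ⬝ᵥ A *ᵥ u.1) + t * (u.1 ⬝ᵥ B *ᵥ u.1)
      ≤ (1 - t) * max (lamMax A) (lamMax B) + t * max (lamMax A) (lamMax B) := by
        gcongr
        · exact hA.trans (le_max_left _ _)
        · exact hB.trans (le_max_right _ _)
    _ = max (lamMax A) (lamMax B) := by ring

end

section
variable {k : ℕ} {A B : Matrix (Fin k) (Fin k) ℝ}

lemma isSelfAdjoint_msqrt (A : Matrix (Fin k) (Fin k) ℝ) : IsSelfAdjoint (msqrt A) :=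
  cfc_predicate _ _

lemma msqrt_mul_msqrt (hA : A.PosSemidef) : msqrt A * msqrt A = A := by
  rw [msqrt, ← cfc_mul _ _ _ (A.continuousOn_spectrum _) (A.continuousOn_spectrum _)]
  conv_rhs => rw [← cfc_id' ℝ A hA.isHermitian]
  exact cfc_congr fun x hx => Real.mul_self_sqrt (spectrum_nonneg_of_nonneg hA.nonneg hx)

lemma isUnit_msqrt (hA : A.PosDef) : IsUnit (msqrt A) :=
  isUnit_of_mul_isUnit_left ((msqrt_mul_msqrt hA.posSemidef).symm ▸ hA.isUnit)

noncomputable def whiten (A B : Matrix (Fin k) (Fin k) ℝ) : Matrix (Fin k) (Fin k) ℝ :=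
  (msqrt A)⁻¹ * B * (msqrt A)⁻¹

lemma isStrictlyPositive_whiten (hA : A.PosDef) (hB : B.PosDef) :
    IsStrictlyPositive (whiten A B) := by
  have hS : IsSelfAdjoint (msqrt A)⁻¹ := (isSelfAdjoint_msqrt A).isHermitian.inv
  have hconj := (Matrix.isUnit_nonsing_inv_iff.2 (isUnit_msqrt hA))
    |>.isStrictlyPositive_star_right_conjugate_iff (a := B)
  rw [hS.star_eq] at hconj
  exact hconj.2 hB.isStrictlyPositive

lemma msqrt_mul_whiten_mul_msqrt (hA : A.PosDef) : msqrt A * whiten A B * msqrt A = B := by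
  have h := (Matrix.isUnit_iff_isUnit_det _).mp (isUnit_msqrt hA)
  simp only [whiten, mul_assoc, Matrix.nonsing_inv_mul _ h, mul_one,
    Matrix.mul_nonsing_inv_cancel_left _ _ h]

lemma smul_add_smul_eq_msqrt_mul_cfc_mul_msqrt (hA : A.PosDef) (hB : B.PosDef) (t : ℝ) :
    (1 - t) • A + t • B =
      msqrt A * cfc (fun x => 1 - t + t * x) (whiten A B) * msqrt A := by
  have hM := (isStrictlyPositive_whiten hA hB).isSelfAdjoint
  rw [cfc_const_add _ _ _ (Matrix.continuousOn_spectrum _ _), cfc_const_mul_id _ _ hM,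
    Algebra.algebraMap_eq_smul_one]
  simp only [mul_add, add_mul, mul_smul_comm, smul_mul_assoc, mul_one,
    msqrt_mul_msqrt hA.posSemidef, msqrt_mul_whiten_mul_msqrt hA]

lemma harmPath_eq_msqrt_mul_cfc_mul_msqrt (hA : A.PosDef) (hB : B.PosDef) {t : ℝ}
    (ht : t ∈ Set.Icc (0 : ℝ) 1) :
    harmPath A B t =
      msqrt A * cfc (fun x => (1 - t + t * x⁻¹)⁻¹) (whiten A B) * msqrt A := by
  have hM := isStrictlyPositive_whiten hA hB
  have hS := (Matrix.isUnit_iff_isUnit_det _).mp (isUnit_msqrt hA)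
  have hpos : ∀ x ∈ spectrum ℝ (whiten A B), 1 - t + t * x⁻¹ ≠ 0 := fun x hx =>
    (one_sub_add_mul_pos ht.1 ht.2 (inv_pos.2 (hM.spectrum_pos hx))).ne'
  rw [cfc_inv _ _ hpos (Matrix.continuousOn_spectrum _ _) hM.isSelfAdjoint,
    cfc_const_add _ _ _ (Matrix.continuousOn_spectrum _ _),
    cfc_const_mul _ _ _ (Matrix.continuousOn_spectrum _ _),
    cfc_ringInverse_id _ hM.isUnit hM.isSelfAdjoint, ← Matrix.nonsing_inv_eq_ringInverse,
    ← Matrix.nonsing_inv_eq_ringInverse, Algebra.algebraMap_eq_smul_one]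
  have hAinv : A⁻¹ = (msqrt A)⁻¹ * (msqrt A)⁻¹ := by
    rw [← Matrix.mul_inv_rev, msqrt_mul_msqrt hA.posSemidef]
  have hBinv : B⁻¹ = (msqrt A)⁻¹ * (whiten A B)⁻¹ * (msqrt A)⁻¹ := by
    conv_lhs => rw [← msqrt_mul_whiten_mul_msqrt hA (B := B)]
    simp only [Matrix.mul_inv_rev, mul_assoc]
  have hsum : (1 - t) • A⁻¹ + t • B⁻¹ =
      (msqrt A)⁻¹ * ((1 - t) • 1 + t • (whiten A B)⁻¹) * (msqrt A)⁻¹ := by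
    simp only [hAinv, hBinv, mul_add, add_mul, mul_smul_comm, smul_mul_assoc, mul_one]
  rw [harmPath, hsum, Matrix.mul_inv_rev, Matrix.mul_inv_rev, Matrix.nonsing_inv_nonsing_inv _ hS,
    mul_assoc]

lemma harmPath_le_geoPath (hA : A.PosDef) (hB : B.PosDef) {t : ℝ}
    (ht : t ∈ Set.Icc (0 : ℝ) 1) : harmPath A B t ≤ geoPath A B t := by
  rw [harmPath_eq_msqrt_mul_cfc_mul_msqrt hA hB ht, geoPath, mpow]
  refine (isSelfAdjoint_msqrt A).conjugate_le_conjugate (cfc_mono (fun x hx => ?_)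
    (Matrix.continuousOn_spectrum _ _) (Matrix.continuousOn_spectrum _ _))
  exact Real.inv_one_sub_add_mul_inv_le_rpow
    ((isStrictlyPositive_whiten hA hB).spectrum_pos hx) ht.1 ht.2

lemma geoPath_le_smul_add_smul (hA : A.PosDef) (hB : B.PosDef) {t : ℝ}
    (ht : t ∈ Set.Icc (0 : ℝ) 1) : geoPath A B t ≤ (1 - t) • A + t • B := by
  rw [smul_add_smul_eq_msqrt_mul_cfc_mul_msqrt hA hB, geoPath, mpow]
  refine (isSelfAdjoint_msqrt A).conjugate_le_conjugate (cfc_mono (fun x hx => ?_)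
    (Matrix.continuousOn_spectrum _ _) (Matrix.continuousOn_spectrum _ _))
  exact Real.rpow_le_one_sub_add_mul
    ((isStrictlyPositive_whiten hA hB).spectrum_pos hx).le ht.1 ht.2

end

theorem lamMax_geoPath_harmPath_general {k : ℕ} (A B : Matrix (Fin k) (Fin k) ℝ)
    (hA : A.PosDef) (hB : B.PosDef) (t : ℝ) (ht : t ∈ Set.Icc (0 : ℝ) 1) :
    lamMax (harmPath A B t) ≤ lamMax (geoPath A B t) ∧
      lamMax (geoPath A B t) ≤ max (lamMax A) (lamMax B) :=
  ⟨lamMax_mono (harmPath_le_geoPath hA hB ht),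
    (lamMax_mono (geoPath_le_smul_add_smul hA hB ht)).trans
      (lamMax_smul_add_smul_le_max A B ht.1 ht.2)⟩

/-- along the geodesic and harmonic paths between positive definite
matrices, `λ₁(Σ*_t) ≤ λ₁(Σ̃_t) ≤ max(λ₁(Σ_a), λ₁(Σ_b))`. -/
theorem lamMax_geoPath_harmPath {k : ℕ} [NeZero k] (A B : Matrix (Fin k) (Fin k) ℝ)
    (hA : A.PosDef) (hB : B.PosDef) (t : ℝ) (ht : t ∈ Set.Icc (0 : ℝ) 1) :
    lamMax (harmPath A B t) ≤ lamMax (geoPath A B t) ∧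
      lamMax (geoPath A B t) ≤ max (lamMax A) (lamMax B) :=
  lamMax_geoPath_harmPath_general A B hA hB t ht
end

section
/- Let P be a probability measure on ℝ^k, T_P ∈ ℝ^k, and define the scatter halfspace depth HD(Σ) = inf over unit vectors u of min( P[|u'(X - T_P)| ≤ √(u'Σu)], P[|u'(X - T_P)| ≥ √(u'Σu)] ) for Σ symmetric positive definite. Then HD is quasi-concave along linear paths: for any Σ_a, Σ_b ∈ 𝒫_k and t ∈ [0,1], HD((1-t)Σ_a + tΣ_b) ≥ min(HD(Σ_a), HD(Σ_b)). -/
open MeasureTheory Matrix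

/-- the scatter halfspace depth is quasi-concave along linear paths. -/
theorem HD_quasiConcave {k : ℕ} (P : Measure (Fin k → ℝ)) [IsProbabilityMeasure P]
    (T : Fin k → ℝ) (A B : Matrix (Fin k) (Fin k) ℝ) (hA : A.PosDef) (hB : B.PosDef)
    (t : ℝ) (ht : t ∈ Set.Icc (0 : ℝ) 1) :
    min (HD P T A) (HD P T B) ≤ HD P T ((1 - t) • A + t • B) := by
  by_cases hk : Nonempty {u : Fin k → ℝ // u ⬝ᵥ u = 1}
  · have hbdd : ∀ (S : Matrix (Fin k) (Fin k) ℝ), BddBelow (Set.range fun u : {u : Fin k → ℝ // u ⬝ᵥ u = 1} =>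
        min (P {x | |u.1 ⬝ᵥ (x - T)| ≤ Real.sqrt (u.1 ⬝ᵥ S *ᵥ u.1)}).toReal
            (P {x | Real.sqrt (u.1 ⬝ᵥ S *ᵥ u.1) ≤ |u.1 ⬝ᵥ (x - T)|}).toReal) := by
      intro S
      exact ⟨0, by rintro x ⟨u, rfl⟩; exact le_min ENNReal.toReal_nonneg ENNReal.toReal_nonneg⟩
    apply le_ciInf
    intro u
    set v := u.1 with hv
    set a := v ⬝ᵥ A *ᵥ v with ha
    set b := v ⬝ᵥ B *ᵥ v with hb
    have hquad : v ⬝ᵥ ((1 - t) • A + t • B) *ᵥ v = (1 - t) * a + t * b := by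
      simp [Matrix.add_mulVec, Matrix.smul_mulVec, dotProduct_add, dotProduct_smul,
        smul_eq_mul, ha, hb]
    set c := v ⬝ᵥ ((1 - t) • A + t • B) *ᵥ v with hc
    obtain ⟨ht0, ht1⟩ := ht
    have hmin : min a b ≤ c := by
      rw [hquad]; nlinarith [min_le_left a b, min_le_right a b]
    have hmax : c ≤ max a b := by
      rw [hquad]; nlinarith [le_max_left a b, le_max_right a b]
    -- monotonicity of the two probability functions
    have g1mono : ∀ r r' : ℝ, r ≤ r' →
        (P {x | |v ⬝ᵥ (x - T)| ≤ r}).toReal ≤ (P {x | |v ⬝ᵥ (x - T)| ≤ r'}).toReal := by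
      intro r r' h
      exact ENNReal.toReal_mono (measure_ne_top P _)
        (measure_mono fun x hx => le_trans hx h)
    have g2mono : ∀ r r' : ℝ, r ≤ r' →
        (P {x | r' ≤ |v ⬝ᵥ (x - T)|}).toReal ≤ (P {x | r ≤ |v ⬝ᵥ (x - T)|}).toReal := by
      intro r r' h
      exact ENNReal.toReal_mono (measure_ne_top P _)
        (measure_mono fun x hx => le_trans h hx)
    have hHA : HD P T A ≤ min (P {x | |v ⬝ᵥ (x - T)| ≤ Real.sqrt a}).toReal
        (P {x | Real.sqrt a ≤ |v ⬝ᵥ (x - T)|}).toReal := ciInf_le (hbdd A) u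
    have hHB : HD P T B ≤ min (P {x | |v ⬝ᵥ (x - T)| ≤ Real.sqrt b}).toReal
        (P {x | Real.sqrt b ≤ |v ⬝ᵥ (x - T)|}).toReal := ciInf_le (hbdd B) u
    rcases le_total a b with hab | hab
    · have hac : a ≤ c := le_trans (by simp [min_eq_left hab]) hmin
      have hcb : c ≤ b := le_trans hmax (by simp [max_eq_right hab])
      refine le_min ?_ ?_
      · calc min (HD P T A) (HD P T B) ≤ HD P T A := min_le_left _ _
          _ ≤ _ := hHA
          _ ≤ (P {x | |v ⬝ᵥ (x - T)| ≤ Real.sqrt a}).toReal := min_le_left _ _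
          _ ≤ _ := g1mono _ _ (Real.sqrt_le_sqrt hac)
      · calc min (HD P T A) (HD P T B) ≤ HD P T B := min_le_right _ _
          _ ≤ _ := hHB
          _ ≤ (P {x | Real.sqrt b ≤ |v ⬝ᵥ (x - T)|}).toReal := min_le_right _ _
          _ ≤ _ := g2mono _ _ (Real.sqrt_le_sqrt hcb)
    · have hbc : b ≤ c := le_trans (by simp [min_eq_right hab]) hmin
      have hca : c ≤ a := le_trans hmax (by simp [max_eq_left hab])
      refine le_min ?_ ?_
      · calc min (HD P T A) (HD P T B) ≤ HD P T B := min_le_right _ _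
          _ ≤ _ := hHB
          _ ≤ (P {x | |v ⬝ᵥ (x - T)| ≤ Real.sqrt b}).toReal := min_le_left _ _
          _ ≤ _ := g1mono _ _ (Real.sqrt_le_sqrt hbc)
      · calc min (HD P T A) (HD P T B) ≤ HD P T A := min_le_left _ _
          _ ≤ _ := hHA
          _ ≤ (P {x | Real.sqrt a ≤ |v ⬝ᵥ (x - T)|}).toReal := min_le_right _ _
          _ ≤ _ := g2mono _ _ (Real.sqrt_le_sqrt hca)
  · rw [not_nonempty_iff] at hk
    simp [HD, Real.iInf_of_isEmpty]
end

section
/- With the scatter halfspace depth HD as above, for every α ≥ 0 the depth region R(α) = {Σ ∈ 𝒫_k : HD(Σ) ≥ α} is a convex subset of the symmetric matrices. -/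
open MeasureTheory Matrix

/-! In every unit direction `u` the map `Σ ↦ uᵀ Σ u` is linear, and the directional depth is the
minimum of a nondecreasing and a nonincreasing function of it, hence quasi-concave in `Σ`.
As an infimum of quasi-concave functions `HD` has convex superlevel sets, and intersecting with
the convex cone of positive definite matrices gives the region. -/

open Set

theorem convex_setOf_posDef {n : Type*} :
    Convex ℝ {A : Matrix n n ℝ | A.PosDef} := by
  intro A hA B hB a b ha hb hab
  rcases ha.eq_or_lt with rfl | ha
  · rw [zero_add] at hab
    simpa [hab] using hB
  · exact (hA.smul ha).add_posSemidef (hB.posSemidef.smul hb)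

section Quasiconcave

variable {𝕜 E F β : Type*} [Semiring 𝕜] [PartialOrder 𝕜] [AddCommMonoid E] [AddCommMonoid F]
  [Module 𝕜 E] [Module 𝕜 F]

theorem QuasiconcaveOn.comp_linearMap [Preorder β] {f : F → β}
    (hf : QuasiconcaveOn 𝕜 univ f) (g : E →ₗ[𝕜] F) : QuasiconcaveOn 𝕜 univ (f ∘ g) := by
  intro r
  simpa [preimage] using (hf r).linear_preimage g

theorem quasiconcaveOn_ciInf [ConditionallyCompleteLattice β] {ι : Type*} [Nonempty ι]
    {s : Set E} {f : ι → E → β} (hbdd : ∀ x, BddBelow (range fun i => f i x))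
    (hf : ∀ i, QuasiconcaveOn 𝕜 s (f i)) : QuasiconcaveOn 𝕜 s fun x => ⨅ i, f i x := by
  intro r
  have hset : {x ∈ s | r ≤ ⨅ i, f i x} = ⋂ i, {x ∈ s | r ≤ f i x} := by
    ext x
    simp [le_ciInf_iff (hbdd x), forall_and]
  rw [hset]
  exact convex_iInter fun i => hf i r

end Quasiconcave

section MeasureMonotone

variable {Ω : Type*} [MeasurableSpace Ω] (μ : Measure Ω) [IsFiniteMeasure μ] (Y : Ω → ℝ)
  {φ : ℝ → ℝ}

theorem monotone_measure_le_comp (hφ : Monotone φ) :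
    Monotone fun s => (μ {ω | Y ω ≤ φ s}).toReal :=
  fun _ _ hst => ENNReal.toReal_mono (measure_ne_top _ _)
    (measure_mono fun _ hω => le_trans hω (hφ hst))

theorem antitone_measure_ge_comp (hφ : Monotone φ) :
    Antitone fun s => (μ {ω | φ s ≤ Y ω}).toReal :=
  fun _ _ hst => ENNReal.toReal_mono (measure_ne_top _ _)
    (measure_mono fun _ hω => le_trans (hφ hst) hω)

end MeasureMonotone

def Matrix.quadFormEval {n : Type*} [Fintype n] (u : n → ℝ) : Matrix n n ℝ →ₗ[ℝ] ℝ where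
  toFun A := u ⬝ᵥ A *ᵥ u
  map_add' A B := by simp only [add_mulVec, dotProduct_add]
  map_smul' c A := by simp only [smul_mulVec, dotProduct_smul, RingHom.id_apply]

theorem quasiconcaveOn_HD {k : ℕ} (P : Measure (Fin k → ℝ)) [IsFiniteMeasure P]
    (T : Fin k → ℝ) : QuasiconcaveOn ℝ univ (HD P T) := by
  rcases isEmpty_or_nonempty {u : Fin k → ℝ // u ⬝ᵥ u = 1} with _ | _
  · have hzero : HD P T = fun _ => 0 := funext fun _ => Real.iInf_of_isEmpty _
    exact hzero ▸ (concaveOn_const 0 convex_univ).quasiconcaveOn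
  · refine quasiconcaveOn_ciInf (fun _ => ⟨0, ?_⟩) fun u => ?_
    · rintro _ ⟨u, rfl⟩
      positivity
    · exact ((monotone_measure_le_comp P (fun x => |u.1 ⬝ᵥ (x - T)|)
        Real.sqrt_monotone).quasiconcaveOn.inf
        (antitone_measure_ge_comp P (fun x => |u.1 ⬝ᵥ (x - T)|)
        Real.sqrt_monotone).quasiconcaveOn).comp_linearMap (Matrix.quadFormEval u.1)

theorem HD_region_convex_general {k : ℕ} (P : Measure (Fin k → ℝ)) [IsProbabilityMeasure P]
    (T : Fin k → ℝ) (α : ℝ) :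
    Convex ℝ {Sg : Matrix (Fin k) (Fin k) ℝ | Sg.PosDef ∧ α ≤ HD P T Sg} := by
  rw [ofPred_and]
  simpa using convex_setOf_posDef.inter (quasiconcaveOn_HD P T α)

/-- for every `α ≥ 0`, the scatter halfspace depth region
`R(α) = {Σ ∈ 𝒫_k : HD_P(Σ) ≥ α}` is convex. -/
theorem HD_region_convex {k : ℕ} (P : Measure (Fin k → ℝ)) [IsProbabilityMeasure P]
    (T : Fin k → ℝ) (α : ℝ) (hα : 0 ≤ α) :
    Convex ℝ {Sg : Matrix (Fin k) (Fin k) ℝ | Sg.PosDef ∧ α ≤ HD P T Sg} :=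
  HD_region_convex_general P T α
end

section
/- Let P be the standard k-variate Gaussian measure normalized so that MAD = 1 (i.e., X = W/b with W standard normal and b = Φ^{-1}(3/4)), and T_P = 0. Then the scatter halfspace depth satisfies HD_P(Σ) = 2 min( Φ(b √λ_k(Σ)) − 1/2, 1 − Φ(b √λ_1(Σ)) ), where λ_1(Σ) and λ_k(Σ) are the largest and smallest eigenvalues of Σ and Φ is the standard normal CDF. -/
open MeasureTheory Matrix

/-- Standard normal CDF. -/
noncomputable def Phi : ℝ → ℝ :=
  fun x => ProbabilityTheory.cdf (ProbabilityTheory.gaussianReal 0 1) x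

/-!
By rotation invariance every unit projection `u ⬝ᵥ W` of the standard Gaussian vector `W` is
standard normal, so `u ⬝ᵥ X = (u ⬝ᵥ W) / b` and the two probabilities defining the depth in
direction `u` are `2 Φ(b √q) - 1` and `2 - 2 Φ(b √q)` with `q = u ⬝ᵥ Σ u`. The first is
increasing and the second decreasing in `q`, and on the compact unit sphere the Rayleigh quotient
attains its extreme values `λ_k` and `λ_1`; so the infimum of the minimum is the minimum of the
first value at `λ_k` and the second at `λ_1`.
-/

open ProbabilityTheory Set WithLp

lemma Monotone.isLeast_range_comp {ι α β : Type*} [Preorder α] [Preorder β] {F : α → β}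
    (hF : Monotone F) {f : ι → α} {a : α} (h : IsLeast (range f) a) :
    IsLeast (range fun i => F (f i)) (F a) := by
  have := hF.map_isLeast h
  rwa [← range_comp] at this

lemma Antitone.isLeast_range_comp {ι α β : Type*} [Preorder α] [Preorder β] {F : α → β}
    (hF : Antitone F) {f : ι → α} {a : α} (h : IsGreatest (range f) a) :
    IsLeast (range fun i => F (f i)) (F a) := by
  have := hF.map_isGreatest h
  rwa [← range_comp] at this

section Phi

instance : NullSingletonClass (gaussianReal 0 1) := nullSingletonClass_gaussianReal one_ne_zero

lemma Phi_eq_measureReal (x : ℝ) : Phi x = (gaussianReal 0 1).real (Iic x) :=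
  cdf_eq_real _ x

lemma monotone_Phi : Monotone Phi := (cdf (gaussianReal 0 1)).mono

lemma Phi_neg (x : ℝ) : Phi (-x) = 1 - Phi x := by
  have hsymm : (gaussianReal 0 1).map (fun y => -y) = gaussianReal 0 1 := by
    simpa using gaussianReal_map_neg (μ := 0) (v := 1)
  calc Phi (-x) = ((gaussianReal 0 1).map (fun y => -y)).real (Iic (-x)) := by
        rw [hsymm, Phi_eq_measureReal]
    _ = (gaussianReal 0 1).real (Iio x)ᶜ := by
        rw [map_measureReal_apply (by fun_prop) measurableSet_Iic, compl_Iio]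
        congr 1
        ext y
        simp
    _ = 1 - Phi x := by
        rw [probReal_compl_eq_one_sub measurableSet_Iio, measureReal_congr Iio_ae_eq_Iic,
          Phi_eq_measureReal]

lemma Phi_zero : Phi 0 = 1 / 2 := by
  linarith [neg_zero (G := ℝ) ▸ Phi_neg 0]

lemma pos_of_half_lt_Phi {b : ℝ} (hb : 1 / 2 < Phi b) : 0 < b := by
  by_contra! hb0
  linarith [monotone_Phi hb0, Phi_zero]

lemma monotone_Phi_mul_sqrt {b : ℝ} (hb : 0 ≤ b) : Monotone fun s => Phi (b * √s) :=
  fun _ _ hst => monotone_Phi (mul_le_mul_of_nonneg_left (Real.sqrt_le_sqrt hst) hb)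

lemma gaussianReal_real_abs_le {t : ℝ} (ht : 0 ≤ t) :
    (gaussianReal 0 1).real {y | |y| ≤ t} = 2 * Phi t - 1 := by
  have hset : {y : ℝ | |y| ≤ t} = Iic t \ Iio (-t) := by
    ext
    simp [abs_le, and_comm]
  rw [hset, measureReal_sdiff (Iio_subset_Iic (by linarith)) measurableSet_Iio,
    measureReal_congr Iio_ae_eq_Iic, ← Phi_eq_measureReal, ← Phi_eq_measureReal, Phi_neg]
  ring

lemma gaussianReal_real_le_abs {t : ℝ} (ht : 0 ≤ t) :
    (gaussianReal 0 1).real {y | t ≤ |y|} = 2 - 2 * Phi t := by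
  have hset : {y : ℝ | t ≤ |y|} = (Ioo (-t) t)ᶜ := by
    ext
    simp [← abs_lt]
  have hIcc : Icc (-t) t = {y : ℝ | |y| ≤ t} := by
    ext
    simp [abs_le]
  rw [hset, probReal_compl_eq_one_sub measurableSet_Ioo, measureReal_congr Ioo_ae_eq_Icc,
    hIcc, gaussianReal_real_abs_le ht]
  ring

end Phi

section Gaussian

variable {ι : Type*} [Fintype ι]

lemma map_dotProduct_pi_gaussianReal (u : ι → ℝ) :
    (Measure.pi fun _ : ι => gaussianReal 0 1).map (u ⬝ᵥ ·)
      = gaussianReal 0 (u ⬝ᵥ u).toNNReal := by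
  set L := innerSL ℝ (toLp 2 u : EuclideanSpace ℝ ι)
  have hL : (u ⬝ᵥ ·) = L ∘ toLp 2 := by
    ext w
    simp [L, EuclideanSpace.inner_eq_star_dotProduct, dotProduct_comm]
  rw [hL, ← Measure.map_map (by fun_prop) (by fun_prop), map_pi_eq_stdGaussian,
    IsGaussian.map_eq_gaussianReal, integral_strongDual_stdGaussian, variance_dual_stdGaussian,
    innerSL_apply_norm, EuclideanSpace.real_norm_sq_eq]
  simp [dotProduct, sq]

lemma measureReal_map_div_pi_gaussianReal_dotProduct_preimage (b : ℝ) {u : ι → ℝ}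
    (hu : u ⬝ᵥ u = 1) {s : Set ℝ} (hs : MeasurableSet s) :
    ((Measure.pi fun _ : ι => gaussianReal 0 1).map (fun w i => w i / b)).real
        ((u ⬝ᵥ ·) ⁻¹' s)
      = (gaussianReal 0 1).real ((· / b) ⁻¹' s) := by
  have hcomm : (u ⬝ᵥ ·) ∘ (fun w i => w i / b) = (· / b) ∘ (u ⬝ᵥ ·) := by
    ext w
    simp [dotProduct, Finset.sum_div, mul_div_assoc]
  rw [← map_measureReal_apply (by fun_prop) hs, Measure.map_map (by fun_prop) (by fun_prop),
    hcomm, ← Measure.map_map (by fun_prop) (by fun_prop), map_dotProduct_pi_gaussianReal, hu,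
    Real.toNNReal_one, map_measureReal_apply (by fun_prop) hs]

end Gaussian

section Rayleigh

lemma isCompact_setOf_dotProduct_self_eq_one (ι : Type*) [Fintype ι] :
    IsCompact {u : ι → ℝ | u ⬝ᵥ u = 1} := by
  have hnorm (u : ι → ℝ) : u ⬝ᵥ u = ‖toLp 2 u‖ ^ 2 := by
    rw [EuclideanSpace.real_norm_sq_eq]
    simp [dotProduct, sq]
  have hsphere : {u : ι → ℝ | u ⬝ᵥ u = 1} = ofLp '' Metric.sphere (0 : EuclideanSpace ℝ ι) 1 := by
    rw [image_eq_preimage_of_inverse (g := toLp 2) (fun _ => rfl) (fun _ => rfl)]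
    ext u
    simp [hnorm, pow_eq_one_iff_of_nonneg (norm_nonneg _) two_ne_zero]
  rw [hsphere]
  exact (isCompact_sphere _ _).image (PiLp.continuous_ofLp 2 _)

variable {ι : Type*} [Fintype ι] (A : Matrix ι ι ℝ)

def rayleigh (u : {u : ι → ℝ // u ⬝ᵥ u = 1}) : ℝ := u.1 ⬝ᵥ A *ᵥ u.1

lemma isCompact_range_rayleigh : IsCompact (range (rayleigh A)) := by
  have := (isCompact_setOf_dotProduct_self_eq_one ι).image
    (show Continuous fun u => u ⬝ᵥ A *ᵥ u by fun_prop)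
  rwa [image_eq_range] at this

end Rayleigh

section Eigenvalues

variable {k : ℕ} [NeZero k] (A : Matrix (Fin k) (Fin k) ℝ)

lemma range_rayleigh_nonempty : (range (rayleigh A)).Nonempty :=
  range_nonempty_iff_nonempty.2 ⟨⟨Pi.single 0 1, by simp⟩⟩

lemma isLeast_lamMin : IsLeast (range (rayleigh A)) (lamMin A) := by
  obtain ⟨a, ha⟩ := (isCompact_range_rayleigh A).exists_isLeast (range_rayleigh_nonempty A)
  rwa [show lamMin A = a from ha.csInf_eq]

lemma isGreatest_lamMax : IsGreatest (range (rayleigh A)) (lamMax A) := by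
  obtain ⟨a, ha⟩ := (isCompact_range_rayleigh A).exists_isGreatest (range_rayleigh_nonempty A)
  rwa [show lamMax A = a from ha.csSup_eq]

end Eigenvalues

lemma HD_map_div_pi_gaussianReal {k : ℕ} {b : ℝ} (hb : 0 < b) (Sg : Matrix (Fin k) (Fin k) ℝ) :
    HD ((Measure.pi fun _ : Fin k => gaussianReal 0 1).map (fun w i => w i / b)) 0 Sg
      = ⨅ u, min (2 * Phi (b * √(rayleigh Sg u)) - 1) (2 - 2 * Phi (b * √(rayleigh Sg u))) := by
  refine iInf_congr fun u => ?_
  set t := √(rayleigh Sg u)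
  have hle : (· / b) ⁻¹' {y | |y| ≤ t} = {y | |y| ≤ b * t} := by
    ext y
    simp [abs_div, abs_of_pos hb, div_le_iff₀ hb, mul_comm]
  have hge : (· / b) ⁻¹' {y | t ≤ |y|} = {y | b * t ≤ |y|} := by
    ext y
    simp [abs_div, abs_of_pos hb, le_div_iff₀ hb, mul_comm]
  simp only [sub_zero]
  change min (Measure.real _ ((u.1 ⬝ᵥ ·) ⁻¹' {y | |y| ≤ t}))
    (Measure.real _ ((u.1 ⬝ᵥ ·) ⁻¹' {y | t ≤ |y|})) = _
  rw [measureReal_map_div_pi_gaussianReal_dotProduct_preimage b u.2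
      (measurableSet_le (by fun_prop) (by fun_prop)),
    measureReal_map_div_pi_gaussianReal_dotProduct_preimage b u.2
      (measurableSet_le (by fun_prop) (by fun_prop)),
    hle, hge, gaussianReal_real_abs_le (by positivity), gaussianReal_real_le_abs (by positivity)]

theorem HD_gaussian_general {k : ℕ} [NeZero k] (b : ℝ) (hb : Phi b = 3 / 4)
    (P : Measure (Fin k → ℝ))
    (hP : P = (Measure.pi fun _ : Fin k => ProbabilityTheory.gaussianReal 0 1).map
      (fun w i => w i / b))
    (Sg : Matrix (Fin k) (Fin k) ℝ) :
    HD P 0 Sg =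
      2 * min (Phi (b * Real.sqrt (lamMin Sg)) - 1 / 2)
              (1 - Phi (b * Real.sqrt (lamMax Sg))) := by
  subst hP
  have hb0 : 0 < b := pos_of_half_lt_Phi (by rw [hb]; norm_num)
  have hmono := monotone_Phi_mul_sqrt hb0.le
  have hmin := Monotone.isLeast_range_comp (F := fun s => 2 * Phi (b * √s) - 1)
    (fun s t hst => by linarith [hmono hst]) (isLeast_lamMin Sg)
  have hmax := Antitone.isLeast_range_comp (F := fun s => 2 - 2 * Phi (b * √s))
    (fun s t hst => by linarith [hmono hst]) (isGreatest_lamMax Sg)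
  rw [HD_map_div_pi_gaussianReal hb0, ciInf_inf_eq hmin.bddBelow hmax.bddBelow, iInf, iInf,
    hmin.csInf_eq, hmax.csInf_eq, mul_min_of_nonneg _ _ zero_le_two]
  congr 1 <;> ring

/-- explicit scatter halfspace depth for the standard `k`-variate
Gaussian measure normalized so that `MAD = 1` (i.e. `X = W/b` with `W` standard
normal and `Φ(b) = 3/4`), with `T_P = 0`. -/
theorem HD_gaussian {k : ℕ} [NeZero k] (b : ℝ) (hb : Phi b = 3 / 4)
    (P : Measure (Fin k → ℝ))
    (hP : P = (Measure.pi fun _ : Fin k => ProbabilityTheory.gaussianReal 0 1).map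
      (fun w i => w i / b))
    (Sg : Matrix (Fin k) (Fin k) ℝ) (hSg : Sg.PosDef) :
    HD P 0 Sg =
      2 * min (Phi (b * Real.sqrt (lamMin Sg)) - 1 / 2)
              (1 - Phi (b * Real.sqrt (lamMax Sg))) :=
  HD_gaussian_general b hb P hP Sg
end

section
/- Let P be a univariate probability measure symmetric about 0 with invertible CDF F, and let T be any centro-equivariant location functional (so T_P = 0). Then for Σ > 0, the scatter halfspace depth equals HD_P(Σ) = 2 min( F(√Σ) − 1/2, 1 − F(√Σ) ), and the depth region R(α) = {Σ > 0 : HD_P(Σ) ≥ α} equals the interval [ (F^{-1}(1/2 + α/2))², (F^{-1}(1 − α/2))² ]. -/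
open MeasureTheory Matrix

/-- Univariate scatter halfspace depth (with location `0`). -/
noncomputable def HD1 (P : Measure ℝ) (c : ℝ) : ℝ :=
  min (P {x | |x| ≤ Real.sqrt c}).toReal (P {x | Real.sqrt c ≤ |x|}).toReal

/-! By symmetry `F (-t) = 1 - F t`, so with no atoms `P[|X| ≤ t] = F t - F (-t) = 2 F t - 1`
and `P[|X| ≥ t] = 2 (1 - F t)`. The depth `2 min (F √c - 1/2, 1 - F √c)` is at least `α` iff
`1/2 + α/2 ≤ F √c ≤ 1 - α/2`, and since `F` is strictly increasing this says
`F⁻¹(1/2 + α/2) ≤ √c ≤ F⁻¹(1 - α/2)`. -/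

open Set ProbabilityTheory

namespace ProbabilityTheory

variable {P : Measure ℝ} [IsProbabilityMeasure P]

lemma measure_Ioo_of_continuous_cdf (hc : Continuous (cdf P)) (a b : ℝ) :
    P (Ioo a b) = ENNReal.ofReal (cdf P b - cdf P a) := by
  nth_rewrite 1 [← measure_cdf P]
  rw [StieltjesFunction.measure_Ioo, hc.continuousWithinAt.leftLim_eq]

lemma measure_Icc_of_continuous_cdf (hc : Continuous (cdf P)) (a b : ℝ) :
    P (Icc a b) = ENNReal.ofReal (cdf P b - cdf P a) := by
  nth_rewrite 1 [← measure_cdf P]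
  rw [StieltjesFunction.measure_Icc, hc.continuousWithinAt.leftLim_eq]

lemma measure_Ici_of_continuous_cdf (hc : Continuous (cdf P)) (a : ℝ) :
    P (Ici a) = ENNReal.ofReal (1 - cdf P a) := by
  nth_rewrite 1 [← measure_cdf P]
  rw [StieltjesFunction.measure_Ici _ (tendsto_cdf_atTop P), hc.continuousWithinAt.leftLim_eq]

lemma cdf_neg_of_map_neg (hsym : P.map (fun x => -x) = P) (hc : Continuous (cdf P)) (t : ℝ) :
    cdf P (-t) = 1 - cdf P t := by
  have h : ENNReal.ofReal (cdf P (-t)) = ENNReal.ofReal (1 - cdf P t) := by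
    calc ENNReal.ofReal (cdf P (-t)) = P.map (fun x => -x) (Iic (-t)) := by
          rw [hsym, ofReal_cdf]
      _ = P (Ici t) := by
          rw [Measure.map_apply measurable_neg measurableSet_Iic, neg_preimage, neg_Iic, neg_neg]
      _ = ENNReal.ofReal (1 - cdf P t) := measure_Ici_of_continuous_cdf hc t
  exact (ENNReal.ofReal_eq_ofReal_iff (cdf_nonneg P _) (sub_nonneg.mpr (cdf_le_one P t))).mp h

lemma cdf_zero_of_map_neg (hsym : P.map (fun x => -x) = P) (hc : Continuous (cdf P)) :
    cdf P 0 = 1 / 2 := by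
  have h := cdf_neg_of_map_neg hsym hc 0
  rw [neg_zero] at h
  linarith

lemma toReal_measure_abs_le_of_map_neg (hsym : P.map (fun x => -x) = P) (hc : Continuous (cdf P))
    {t : ℝ} (ht : 0 ≤ t) : (P {x | |x| ≤ t}).toReal = 2 * cdf P t - 1 := by
  have h_half : 1 / 2 ≤ cdf P t := cdf_zero_of_map_neg hsym hc ▸ monotone_cdf P ht
  simp_rw [abs_le, ← mem_Icc, ofPred_mem_eq]
  rw [measure_Icc_of_continuous_cdf hc, cdf_neg_of_map_neg hsym hc,
    ENNReal.toReal_ofReal (by linarith)]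
  ring

lemma toReal_measure_le_abs_of_map_neg (hsym : P.map (fun x => -x) = P) (hc : Continuous (cdf P))
    {t : ℝ} (ht : 0 ≤ t) : (P {x | t ≤ |x|}).toReal = 2 * (1 - cdf P t) := by
  have h_half : 1 / 2 ≤ cdf P t := cdf_zero_of_map_neg hsym hc ▸ monotone_cdf P ht
  have h_compl : {x : ℝ | t ≤ |x|} = (Ioo (-t) t)ᶜ := by
    ext x
    simp [← abs_lt]
  rw [h_compl, measure_compl measurableSet_Ioo (measure_ne_top _ _), measure_univ,
    measure_Ioo_of_continuous_cdf hc, cdf_neg_of_map_neg hsym hc,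
    ENNReal.toReal_sub_of_le (ENNReal.ofReal_le_one.mpr (by linarith [cdf_le_one P t]))
      ENNReal.one_ne_top, ENNReal.toReal_one, ENNReal.toReal_ofReal (by linarith)]
  ring

lemma HD1_eq_of_map_neg (hsym : P.map (fun x => -x) = P) (hc : Continuous (cdf P)) (c : ℝ) :
    HD1 P c = 2 * min (cdf P √c - 1 / 2) (1 - cdf P √c) := by
  rw [HD1, toReal_measure_abs_le_of_map_neg hsym hc (Real.sqrt_nonneg c),
    toReal_measure_le_abs_of_map_neg hsym hc (Real.sqrt_nonneg c),
    mul_min_of_nonneg _ _ zero_le_two]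
  congr 1; ring

end ProbabilityTheory

lemma le_two_mul_min_iff {α y : ℝ} :
    α ≤ 2 * min (y - 1 / 2) (1 - y) ↔ 1 / 2 + α / 2 ≤ y ∧ y ≤ 1 - α / 2 := by
  rw [mul_min_of_nonneg _ _ zero_le_two, le_min_iff]
  constructor <;> rintro ⟨h₁, h₂⟩ <;> constructor <;> linarith

lemma setOf_pos_and_le_sqrt_and_sqrt_le {a b : ℝ} (ha : 0 < a) (hb : 0 ≤ b) :
    {c : ℝ | 0 < c ∧ a ≤ √c ∧ √c ≤ b} = Icc (a ^ 2) (b ^ 2) := by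
  ext c
  simp only [mem_ofPred_eq, mem_Icc, Real.le_sqrt' ha, Real.sqrt_le_left hb]
  constructor
  · exact fun ⟨_, h⟩ => h
  · exact fun h => ⟨(pow_pos ha 2).trans_le h.1, h⟩

/-- for a univariate probability measure symmetric about `0` with
invertible CDF `F`, the scatter halfspace depth is `2 min(F(√Σ) − 1/2, 1 − F(√Σ))`
and the depth region of order `α` is `[ (F⁻¹(1/2 + α/2))², (F⁻¹(1 − α/2))² ]`. -/
theorem HD_univariate_symmetric (P : Measure ℝ) [IsProbabilityMeasure P]
    (hsym : P.map (fun x => -x) = P)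
    (F : ℝ → ℝ) (hF : F = fun x => ProbabilityTheory.cdf P x)
    (hFc : Continuous F) (hFm : StrictMono F)
    (Finv : ℝ → ℝ) (hFinv : ∀ y ∈ Set.Ioo (0 : ℝ) 1, F (Finv y) = y) :
    (∀ c : ℝ, 0 < c →
        HD1 P c = 2 * min (F (Real.sqrt c) - 1 / 2) (1 - F (Real.sqrt c))) ∧
      (∀ α : ℝ, 0 < α → α < 1 →
        {c : ℝ | 0 < c ∧ α ≤ HD1 P c} =
          Set.Icc ((Finv (1 / 2 + α / 2)) ^ 2) ((Finv (1 - α / 2)) ^ 2)) := by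
  obtain rfl : F = cdf P := hF
  refine ⟨fun c _ => HD1_eq_of_map_neg hsym hFc c, fun α hα₀ hα₁ => ?_⟩
  set a := Finv (1 / 2 + α / 2)
  set b := Finv (1 - α / 2)
  have hFa : cdf P a = 1 / 2 + α / 2 := hFinv _ ⟨by linarith, by linarith⟩
  have hFb : cdf P b = 1 - α / 2 := hFinv _ ⟨by linarith, by linarith⟩
  have h_half := cdf_zero_of_map_neg hsym hFc
  have ha : 0 < a := hFm.lt_iff_lt.mp (by linarith)
  have hb : 0 < b := hFm.lt_iff_lt.mp (by linarith)
  have h_lower (x : ℝ) : 1 / 2 + α / 2 ≤ cdf P x ↔ a ≤ x := by rw [← hFa, hFm.le_iff_le]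
  have h_upper (x : ℝ) : cdf P x ≤ 1 - α / 2 ↔ x ≤ b := by rw [← hFb, hFm.le_iff_le]
  rw [← setOf_pos_and_le_sqrt_and_sqrt_le ha hb.le]
  ext c
  simp only [mem_ofPred_eq, HD1_eq_of_map_neg hsym hFc, le_two_mul_min_iff, h_lower, h_upper]
end

section
/- Let P be a probability measure on ℝ^k with location T_P. For every α > 0 the scatter halfspace depth region R(α) = {Σ ∈ 𝒫_k : HD_P(Σ) ≥ α} is bounded in Frobenius norm: there exists r > 0 with ‖Σ − I_k‖_F < r for every Σ ∈ R(α). -/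
open MeasureTheory Matrix

/-! Choose `R` so that `P` gives mass less than `α` to `{x | R ≤ ‖x - T‖∞}`. If some diagonal
entry had `Σ i i > R ^ 2`, the depth in the coordinate direction `e i` would be at most that mass,
so depth `≥ α` forces `Σ i i ≤ R ^ 2` for all `i`. Positive semidefiniteness (the `2 × 2` principal
minors) then bounds every entry by `R ^ 2`, hence `‖Σ - 1‖_F ≤ k (R ^ 2 + 1)`. -/

lemma exists_measure_le_dist_lt {X : Type*} [PseudoMetricSpace X] [MeasurableSpace X]
    [OpensMeasurableSpace X] (μ : Measure X) [IsFiniteMeasure μ] (x₀ : X) {ε : ENNReal}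
    (hε : 0 < ε) : ∃ R : ℝ, μ {x | R ≤ dist x x₀} < ε := by
  set A : ℝ → Set X := fun R => {x | R ≤ dist x x₀}
  have hA_meas : ∀ R, NullMeasurableSet (A R) μ := fun R =>
    (isClosed_le continuous_const (continuous_id.dist continuous_const)).measurableSet
      |>.nullMeasurableSet
  have hA_anti : Antitone A := fun R R' hRR' x hx => hRR'.trans hx
  have hA_empty : ⋂ R, A R = ∅ :=
    Set.iInter_eq_empty_iff.2 fun x => ⟨dist x x₀ + 1, by simp [A]⟩
  have hlim := tendsto_measure_iInter_atTop hA_meas hA_anti ⟨0, measure_ne_top μ _⟩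
  rw [hA_empty, measure_empty] at hlim
  exact (hlim.eventually_lt_const hε).exists

lemma Matrix.PosSemidef.sq_apply_le {n : Type*} [Fintype n] {S : Matrix n n ℝ}
    (hS : S.PosSemidef) (i j : n) : S i j ^ 2 ≤ S i i * S j j := by
  have hminor := (hS.submatrix ![i, j]).det_nonneg
  have hsymm : S j i = S i j := by simpa using hS.1.apply i j
  rw [det_fin_two] at hminor
  simp only [submatrix_apply, Matrix.cons_val_zero, Matrix.cons_val_one, hsymm] at hminor
  linarith

lemma Matrix.PosSemidef.abs_apply_le_of_diag_le {n : Type*} [Fintype n] {S : Matrix n n ℝ}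
    (hS : S.PosSemidef) {c : ℝ} (hc : ∀ i, S i i ≤ c) (i j : n) : |S i j| ≤ c := by
  refine abs_le_of_sq_le_sq ?_ (hS.diag_nonneg.trans (hc i))
  calc S i j ^ 2 ≤ S i i * S j j := hS.sq_apply_le i j
    _ ≤ c ^ 2 := by
      rw [sq]
      exact mul_le_mul (hc i) (hc j) hS.diag_nonneg (hS.diag_nonneg.trans (hc i))

lemma frob_le_of_abs_apply_le {k : ℕ} {A : Matrix (Fin k) (Fin k) ℝ} {c : ℝ} (hc : 0 ≤ c)
    (hA : ∀ i j, |A i j| ≤ c) : frob A ≤ k * c := by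
  refine Real.sqrt_le_iff.2 ⟨by positivity, ?_⟩
  calc ∑ i, ∑ j, A i j ^ 2 ≤ ∑ _i : Fin k, ∑ _j : Fin k, c ^ 2 := by
        refine Finset.sum_le_sum fun i _ => Finset.sum_le_sum fun j _ => ?_
        rw [← sq_abs]
        exact pow_le_pow_left₀ (abs_nonneg _) (hA i j) 2
    _ = (k * c) ^ 2 := by
      simp only [Finset.sum_const, Finset.card_univ, Fintype.card_fin, nsmul_eq_mul]
      ring

lemma frob_sub_one_le_of_diag_le {k : ℕ} {S : Matrix (Fin k) (Fin k) ℝ} (hS : S.PosSemidef)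
    {c : ℝ} (hc₀ : 0 ≤ c) (hc : ∀ i, S i i ≤ c) : frob (S - 1) ≤ k * (c + 1) := by
  refine frob_le_of_abs_apply_le (by linarith) fun i j => ?_
  have hone : |(1 : Matrix (Fin k) (Fin k) ℝ) i j| ≤ 1 := by
    rw [one_apply]; split_ifs <;> simp
  calc |(S - 1) i j| ≤ |S i j| + |(1 : Matrix (Fin k) (Fin k) ℝ) i j| := abs_sub _ _
    _ ≤ c + 1 := add_le_add (hS.abs_apply_le_of_diag_le hc i j) hone

lemma HD_le_measure_le_abs {k : ℕ} (P : Measure (Fin k → ℝ)) (T : Fin k → ℝ)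
    (Sg : Matrix (Fin k) (Fin k) ℝ) (u : {u : Fin k → ℝ // u ⬝ᵥ u = 1}) :
    HD P T Sg ≤ (P {x | Real.sqrt (u.1 ⬝ᵥ Sg *ᵥ u.1) ≤ |u.1 ⬝ᵥ (x - T)|}).toReal := by
  refine (ciInf_le ⟨0, ?_⟩ u).trans (min_le_right _ _)
  rintro _ ⟨v, rfl⟩
  exact le_min ENNReal.toReal_nonneg ENNReal.toReal_nonneg

lemma HD_le_measure_le_abs_apply {k : ℕ} (P : Measure (Fin k → ℝ)) (T : Fin k → ℝ)
    (Sg : Matrix (Fin k) (Fin k) ℝ) (i : Fin k) :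
    HD P T Sg ≤ (P {x | Real.sqrt (Sg i i) ≤ |x i - T i|}).toReal := by
  simpa [single_dotProduct, mulVec_single] using
    HD_le_measure_le_abs P T Sg ⟨Pi.single i 1, by simp⟩

lemma diag_le_sq_of_le_HD {k : ℕ} (P : Measure (Fin k → ℝ)) [IsFiniteMeasure P]
    (T : Fin k → ℝ) {Sg : Matrix (Fin k) (Fin k) ℝ} {α R : ℝ}
    (htail : P {x | R ≤ dist x T} < ENNReal.ofReal α) (hHD : α ≤ HD P T Sg) (i : Fin k) :
    Sg i i ≤ R ^ 2 := by
  by_contra! hdiag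
  have hR : R < Real.sqrt (Sg i i) := Real.lt_sqrt_of_sq_lt hdiag
  have hsub : {x | Real.sqrt (Sg i i) ≤ |x i - T i|} ⊆ {x | R ≤ dist x T} := fun x hx =>
    hR.le.trans <| hx.trans <| by simpa [Real.dist_eq] using dist_le_pi_dist x T i
  have hsmall := ENNReal.toReal_lt_of_lt_ofReal ((measure_mono hsub).trans_lt htail)
  linarith [HD_le_measure_le_abs_apply P T Sg i]

/-- for every `α > 0`, the scatter halfspace depth region `R(α)` is
bounded in Frobenius norm. -/
theorem HD_region_F_bounded {k : ℕ} (P : Measure (Fin k → ℝ)) [IsProbabilityMeasure P]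
    (T : Fin k → ℝ) (α : ℝ) (hα : 0 < α) :
    ∃ r > (0 : ℝ), ∀ Sg : Matrix (Fin k) (Fin k) ℝ, Sg.PosDef →
      α ≤ HD P T Sg → frob (Sg - 1) < r := by
  obtain ⟨R, htail⟩ := exists_measure_le_dist_lt P T (ENNReal.ofReal_pos.2 hα)
  refine ⟨k * (R ^ 2 + 1) + 1, by positivity, fun Sg hSg hHD => ?_⟩
  have hdiag := diag_le_sq_of_le_HD P T htail hHD
  linarith [frob_sub_one_le_of_diag_le hSg.posSemidef (sq_nonneg R) hdiag]
end

section
/- Let P be a probability measure on ℝ^k, T_P ∈ ℝ^k, and suppose there exists a unit vector u_0 with P[u_0'(X − T_P) = 0] = s ≥ 1/2. Then the scatter halfspace depth satisfies HD_P(Σ) ≤ 1 − s for every Σ ∈ 𝒫_k; in particular, the depth region R(α) is empty for every α > 1 − s. -/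
open MeasureTheory Matrix

theorem measurableSet_setOf_dotProduct_sub_eq_zero {k : ℕ} (u T : Fin k → ℝ) :
    MeasurableSet {x : Fin k → ℝ | u ⬝ᵥ (x - T) = 0} :=
  measurableSet_eq_fun
    (continuous_const.dotProduct (continuous_id.sub continuous_const)).measurable measurable_const

theorem setOf_sqrt_le_abs_dotProduct_subset {k : ℕ} {Sg : Matrix (Fin k) (Fin k) ℝ}
    (hSg : Sg.PosDef) {u : Fin k → ℝ} (hu : u ≠ 0) (T : Fin k → ℝ) :
    {x | √(u ⬝ᵥ Sg *ᵥ u) ≤ |u ⬝ᵥ (x - T)|} ⊆ {x | u ⬝ᵥ (x - T) = 0}ᶜ := by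
  intro x (hx : √(u ⬝ᵥ Sg *ᵥ u) ≤ |u ⬝ᵥ (x - T)|) (hzero : u ⬝ᵥ (x - T) = 0)
  rw [hzero, abs_zero] at hx
  exact (Real.sqrt_pos.mpr (by simpa using hSg.dotProduct_mulVec_pos hu)).not_ge hx

theorem HD_le_measureReal_compl_hyperplane {k : ℕ} (P : Measure (Fin k → ℝ))
    [IsFiniteMeasure P] (T : Fin k → ℝ) {Sg : Matrix (Fin k) (Fin k) ℝ} (hSg : Sg.PosDef)
    {u : Fin k → ℝ} (hu : u ⬝ᵥ u = 1) : HD P T Sg ≤ P.real {x | u ⬝ᵥ (x - T) = 0}ᶜ := by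
  have hu0 : u ≠ 0 := by rintro rfl; simp at hu
  have hbdd : BddBelow (Set.range fun u : {u : Fin k → ℝ // u ⬝ᵥ u = 1} =>
      min (P {x | |u.1 ⬝ᵥ (x - T)| ≤ √(u.1 ⬝ᵥ Sg *ᵥ u.1)}).toReal
        (P {x | √(u.1 ⬝ᵥ Sg *ᵥ u.1) ≤ |u.1 ⬝ᵥ (x - T)|}).toReal) :=
    ⟨0, by rintro _ ⟨_, rfl⟩; positivity⟩
  calc HD P T Sg
      ≤ min (P {x | |u ⬝ᵥ (x - T)| ≤ √(u ⬝ᵥ Sg *ᵥ u)}).toReal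
          (P {x | √(u ⬝ᵥ Sg *ᵥ u) ≤ |u ⬝ᵥ (x - T)|}).toReal :=
        ciInf_le hbdd ⟨u, hu⟩
    _ ≤ P.real {x | √(u ⬝ᵥ Sg *ᵥ u) ≤ |u ⬝ᵥ (x - T)|} := min_le_right _ _
    _ ≤ P.real {x | u ⬝ᵥ (x - T) = 0}ᶜ :=
        measureReal_mono (setOf_sqrt_le_abs_dotProduct_subset hSg hu0 T)

theorem HD_le_of_mass_on_hyperplane_general {k : ℕ} (P : Measure (Fin k → ℝ))
    [IsProbabilityMeasure P] (T : Fin k → ℝ)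
    (u0 : Fin k → ℝ) (hu0 : u0 ⬝ᵥ u0 = 1) (s : ℝ)
    (hs : (P {x | u0 ⬝ᵥ (x - T) = 0}).toReal = s) :
    (∀ Sg : Matrix (Fin k) (Fin k) ℝ, Sg.PosDef → HD P T Sg ≤ 1 - s) ∧
      ∀ α : ℝ, 1 - s < α →
        {Sg : Matrix (Fin k) (Fin k) ℝ | Sg.PosDef ∧ α ≤ HD P T Sg} = ∅ := by
  have hdepth (Sg : Matrix (Fin k) (Fin k) ℝ) (hSg : Sg.PosDef) : HD P T Sg ≤ 1 - s := by
    have hcompl := HD_le_measureReal_compl_hyperplane P T hSg hu0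
    rwa [probReal_compl_eq_one_sub (measurableSet_setOf_dotProduct_sub_eq_zero u0 T),
      measureReal_def, hs] at hcompl
  exact ⟨hdepth, fun α hα => Set.eq_empty_of_forall_notMem fun Sg ⟨hSg, hα'⟩ =>
    (hα.trans_le hα').not_ge (hdepth Sg hSg)⟩

/-- if some direction `u₀` carries probability mass `s ≥ 1/2` on the
hyperplane through `T_P`, then every scatter matrix has depth at most `1 − s`, and
the depth regions of order `α > 1 − s` are empty. -/
theorem HD_le_of_mass_on_hyperplane {k : ℕ} (P : Measure (Fin k → ℝ))
    [IsProbabilityMeasure P] (T : Fin k → ℝ)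
    (u0 : Fin k → ℝ) (hu0 : u0 ⬝ᵥ u0 = 1) (s : ℝ)
    (hs : (P {x | u0 ⬝ᵥ (x - T) = 0}).toReal = s) (hhalf : 1 / 2 ≤ s) :
    (∀ Sg : Matrix (Fin k) (Fin k) ℝ, Sg.PosDef → HD P T Sg ≤ 1 - s) ∧
      ∀ α : ℝ, 1 - s < α →
        {Sg : Matrix (Fin k) (Fin k) ℝ | Sg.PosDef ∧ α ≤ HD P T Sg} = ∅ :=
  HD_le_of_mass_on_hyperplane_general P T u0 hu0 s hs
end

section
/- Let P be a probability measure on ℝ^k, K ⊂ ℝ^k compact, and for c ≥ 0 define s(c) = sup over (θ, u) ∈ K × S^{k-1} of P[|u'(X − θ)| ≤ c]. Then s(c) → s(0) as c decreases to 0, and the supremum s(0) is attained: there exist θ_0 ∈ K and a unit vector u_0 with s(0) = P[u_0'(X − θ_0) = 0]. -/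
open MeasureTheory Matrix

/-- `s(c) = sup_{(θ,u) ∈ K × S^{k-1}} P[|u'(X − θ)| ≤ c]`. -/
noncomputable def sfun {k : ℕ} (P : Measure (Fin k → ℝ)) (K : Set (Fin k → ℝ))
    (c : ℝ) : ℝ :=
  ⨆ θ : K, ⨆ u : {u : Fin k → ℝ // u ⬝ᵥ u = 1},
    (P {x | |u.1 ⬝ᵥ (x - θ.1)| ≤ c}).toReal

/-! The measure of the closed slab `{x | |u ⬝ᵥ (x - θ)| ≤ c}` is upper semicontinuous in
`(θ, u, c)`: the slabs form a closed subset of parameters × `ℝ^k`, so along a convergent sequence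
of parameters every point lying in infinitely many slabs lies in the limiting one, and continuity
from above of `P` on the tails `⋃ n ≥ m` bounds the limsup of the masses. Hence for every `c` the
supremum over the compact set `K × S^{k-1}` is attained, and extracting a convergent subsequence of
maximizers shows that `s` is upper semicontinuous. Being monotone, `s` is then right-continuous
at `0`, and a maximizer for `c = 0` is the required `(θ₀, u₀)`. -/

open Filter Topology

theorem le_measure_of_tendsto_of_isClosed {X Y : Type*} [TopologicalSpace X] [MeasurableSpace X]
    [OpensMeasurableSpace X] [TopologicalSpace Y] {μ : Measure X} [IsFiniteMeasure μ]
    {S : Y → Set X} (hS : IsClosed {q : Y × X | q.2 ∈ S q.1}) {y : ℕ → Y} {y₀ : Y}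
    (hy : Tendsto y atTop (𝓝 y₀)) {r : ENNReal} (hr : ∀ n, r ≤ μ (S (y n))) :
    r ≤ μ (S y₀) := by
  set B : ℕ → Set X := fun m => ⋃ n ≥ m, S (y n)
  have hB_meas : ∀ m, NullMeasurableSet (B m) μ := fun m =>
    (MeasurableSet.biUnion (Set.to_countable _) fun n _ =>
      (hS.preimage (Continuous.prodMk_right (y n))).measurableSet).nullMeasurableSet
  have hB_anti : Antitone B := fun m m' h =>
    Set.biUnion_mono (fun n hn => h.trans hn) fun _ _ => le_rfl
  have hlimsup : ⋂ m, B m ⊆ S y₀ := by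
    intro x hx
    have hfreq : ∃ᶠ n in atTop, (y n, x) ∈ {q : Y × X | q.2 ∈ S q.1} := by
      simpa [frequently_atTop, B] using hx
    exact hS.mem_of_frequently_of_tendsto hfreq (hy.prodMk_nhds tendsto_const_nhds)
  have hlim := tendsto_measure_iInter_atTop hB_meas hB_anti ⟨0, measure_ne_top μ _⟩
  have hS_le_B : ∀ m, S (y m) ⊆ B m := fun m =>
    Set.subset_biUnion_of_mem (u := fun n => S (y n)) (le_refl m)
  calc r ≤ μ (⋂ m, B m) := ge_of_tendsto' hlim fun m => (hr m).trans (measure_mono (hS_le_B m))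
    _ ≤ μ (S y₀) := measure_mono hlimsup

theorem upperSemicontinuous_measureReal_of_isClosed {X Y : Type*} [TopologicalSpace X]
    [MeasurableSpace X] [OpensMeasurableSpace X] [TopologicalSpace Y] [FirstCountableTopology Y]
    (μ : Measure X) [IsFiniteMeasure μ] {S : Y → Set X}
    (hS : IsClosed {q : Y × X | q.2 ∈ S q.1}) :
    UpperSemicontinuous fun y => μ.real (S y) := by
  refine upperSemicontinuous_iff_frequently.2 fun y₀ r hfreq => ?_
  obtain ⟨y, hy, hr⟩ := frequently_iff_seq_forall.1 hfreq
  simp only [ge_iff_le, Measure.real,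
    ← ENNReal.ofReal_le_iff_le_toReal (measure_ne_top μ _)] at hr ⊢
  exact le_measure_of_tendsto_of_isClosed hS hy hr

variable {k : ℕ}

def slab (θ u : Fin k → ℝ) (c : ℝ) : Set (Fin k → ℝ) := {x | |u ⬝ᵥ (x - θ)| ≤ c}

/-- The Euclidean unit sphere; `Metric.sphere 0 1` would be the sup-norm sphere of `Fin k → ℝ`. -/
def unitSphere (k : ℕ) : Set (Fin k → ℝ) := {u | u ⬝ᵥ u = 1}

theorem unitSphere_nonempty [NeZero k] : (unitSphere k).Nonempty :=
  ⟨Pi.single 0 1, by simp [unitSphere, dotProduct, Pi.single_apply]⟩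

theorem isCompact_unitSphere : IsCompact (unitSphere k) := by
  refine (isCompact_univ_pi fun _ => isCompact_Icc (a := (-1 : ℝ)) (b := 1)).of_isClosed_subset
    (isClosed_eq (by fun_prop) continuous_const) fun u (hu : u ⬝ᵥ u = 1) i _ => ?_
  have hui : u i * u i ≤ u ⬝ᵥ u :=
    Finset.single_le_sum (fun j _ => mul_self_nonneg (u j)) (Finset.mem_univ i)
  exact abs_le.1 (abs_le_one_iff_mul_self_le_one.2 (hu ▸ hui))

theorem upperSemicontinuous_measureReal_slab (P : Measure (Fin k → ℝ)) [IsFiniteMeasure P] :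
    UpperSemicontinuous
      fun q : ((Fin k → ℝ) × (Fin k → ℝ)) × ℝ => P.real (slab q.1.1 q.1.2 q.2) :=
  upperSemicontinuous_measureReal_of_isClosed P <| isClosed_le
    (f := fun q : (((Fin k → ℝ) × (Fin k → ℝ)) × ℝ) × (Fin k → ℝ) => |q.1.1.2 ⬝ᵥ (q.2 - q.1.1.1)|)
    (by fun_prop) (by fun_prop)

theorem slab_zero (θ u : Fin k → ℝ) : slab θ u 0 = {x | u ⬝ᵥ (x - θ) = 0} := by
  ext x
  simp [slab, abs_nonpos_iff]

section sfun

variable (P : Measure (Fin k → ℝ)) (K : Set (Fin k → ℝ))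

theorem sfun_nonneg (c : ℝ) : 0 ≤ sfun P K c :=
  Real.iSup_nonneg fun _ => Real.iSup_nonneg fun _ => measureReal_nonneg

theorem sfun_le {c a : ℝ} (ha : 0 ≤ a)
    (h : ∀ θ ∈ K, ∀ u ∈ unitSphere k, P.real (slab θ u c) ≤ a) : sfun P K c ≤ a :=
  Real.iSup_le (fun θ => Real.iSup_le (fun u => h θ.1 θ.2 u.1 u.2) ha) ha

variable [IsFiniteMeasure P]

theorem measureReal_slab_le_sfun {θ u : Fin k → ℝ} (hθ : θ ∈ K) (hu : u ∈ unitSphere k) (c : ℝ) :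
    P.real (slab θ u c) ≤ sfun P K c := by
  have hbound : ∀ θ' : Fin k → ℝ, ∀ v : {v : Fin k → ℝ // v ⬝ᵥ v = 1},
      P.real (slab θ' v.1 c) ≤ P.real Set.univ := fun _ _ => measureReal_mono (Set.subset_univ _)
  refine le_ciSup_of_le ⟨P.real Set.univ, ?_⟩ ⟨θ, hθ⟩
    (le_ciSup ⟨P.real Set.univ, Set.forall_mem_range.2 (hbound θ)⟩ ⟨u, hu⟩)
  exact Set.forall_mem_range.2 fun θ' => Real.iSup_le (hbound θ') measureReal_nonneg

theorem sfun_mono : Monotone (sfun P K) := fun _ _ hcc' =>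
  sfun_le P K (sfun_nonneg P K _) fun _ hθ _ hu =>
    (measureReal_mono fun _ hx => le_trans hx hcc').trans (measureReal_slab_le_sfun P K hθ hu _)

variable [NeZero k] {K}

theorem exists_sfun_eq (hK : IsCompact K) (hKne : K.Nonempty) (c : ℝ) :
    ∃ θ ∈ K, ∃ u ∈ unitSphere k, sfun P K c = P.real (slab θ u c) := by
  have husc : UpperSemicontinuousOn
      (fun p : (Fin k → ℝ) × (Fin k → ℝ) => P.real (slab p.1 p.2 c)) (K ×ˢ unitSphere k) :=
    ((upperSemicontinuous_measureReal_slab P).comp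
      (Continuous.prodMk_left c)).upperSemicontinuousOn _
  obtain ⟨p, hp, hmax⟩ := husc.exists_isMaxOn (hKne.prod unitSphere_nonempty)
    (hK.prod isCompact_unitSphere)
  refine ⟨p.1, hp.1, p.2, hp.2, le_antisymm ?_ (measureReal_slab_le_sfun P K hp.1 hp.2 c)⟩
  exact sfun_le P K measureReal_nonneg fun θ hθ u hu => hmax (Set.mk_mem_prod hθ hu)

theorem upperSemicontinuous_sfun (hK : IsCompact K) (hKne : K.Nonempty) :
    UpperSemicontinuous (sfun P K) := by
  refine upperSemicontinuous_iff_frequently.2 fun c₀ r hfreq => ?_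
  obtain ⟨c, hc, hr⟩ := frequently_iff_seq_forall.1 hfreq
  choose θ hθ u hu hmax using fun n => exists_sfun_eq P hK hKne (c n)
  obtain ⟨p₀, hp₀, φ, hφ, hconv⟩ :=
    (hK.prod isCompact_unitSphere).tendsto_subseq fun n => Set.mk_mem_prod (hθ n) (hu n)
  have hq : Tendsto (fun n => ((θ (φ n), u (φ n)), c (φ n))) atTop (𝓝 (p₀, c₀)) :=
    hconv.prodMk_nhds (hc.comp hφ.tendsto_atTop)
  have hfreq' : ∃ᶠ q in 𝓝 (p₀, c₀), r ≤ P.real (slab q.1.1 q.1.2 q.2) :=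
    hq.frequently (Frequently.of_forall fun n => (hr (φ n)).trans (hmax (φ n)).le)
  have hslab :=
    upperSemicontinuous_iff_frequently.1 (upperSemicontinuous_measureReal_slab P) (p₀, c₀) r hfreq'
  exact hslab.trans (measureReal_slab_le_sfun P K hp₀.1 hp₀.2 c₀)

end sfun

/-- `s(c) → s(0)` as `c ↓ 0`, and the supremum `s(0)` is attained at
some `(θ₀, u₀) ∈ K × S^{k-1}`. -/
theorem sfun_tendsto_and_attained {k : ℕ} [NeZero k] (P : Measure (Fin k → ℝ))
    [IsProbabilityMeasure P] (K : Set (Fin k → ℝ)) (hK : IsCompact K)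
    (hKne : K.Nonempty) :
    Filter.Tendsto (sfun P K) (nhdsWithin 0 (Set.Ioi 0)) (nhds (sfun P K 0)) ∧
      ∃ θ0 ∈ K, ∃ u0 : Fin k → ℝ, u0 ⬝ᵥ u0 = 1 ∧
        sfun P K 0 = (P {x | u0 ⬝ᵥ (x - θ0) = 0}).toReal := by
  refine ⟨tendsto_order.2 ⟨fun a ha => ?_, fun b hb => ?_⟩, ?_⟩
  · exact eventually_nhdsWithin_of_forall fun c hc => ha.trans_le (sfun_mono P K hc.le)
  · exact nhdsWithin_le_nhds (upperSemicontinuous_sfun P hK hKne 0 b hb)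
  · obtain ⟨θ, hθ, u, hu, h⟩ := exists_sfun_eq P hK hKne 0
    exact ⟨θ, hθ, u, hu, by rw [h, slab_zero]; rfl⟩
end
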